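/- arXiv:2008.11274 — 2 statements merged into one kernel-verified Lean document; each statement's English description precedes it below -/
import Mathlib

section
/- Let (Θ, μ) be a probability space and (X, ν) a finite measure space. Let (λ_i)_{i≥1} be a summable sequence of nonnegative reals, (Φ_i)_{i≥1} an orthonormal family in L²(X, ν), (f_i)_{i≥1} an orthonormal family in L²(Θ, μ), and f̄ ∈ L²(X, ν). Let (Ψ_k)_{k≥0} be a family of pairwise orthogonal nonzero elements of L²(Θ, μ), and suppose that for each i = 1, …, N the mode f_i admits the expansion f_i = Σ_{k=0}^∞ c_{i,k} Ψ_k converging in L²(Θ, μ). Given approximate coefficients ĉ_{i,k} for 0 ≤ k ≤ N_PC, define f_i^PC = Σ_{k=0}^{N_PC} ĉ_{i,k} Ψ_k, and define f_N(ξ, s) = f̄(s) + Σ_{i=1}^N √λ_i f_i(ξ) Φ_i(s) and f_N^PC(ξ, s) = f̄(s) + Σ_{i=1}^N √λ_i f_i^PC(ξ) Φ_i(s). Then ‖f_N − f_N^PC‖²_{L²(Θ×X, μ⊗ν)} = Σ_{i=1}^N λ_i [ Σ_{k=0}^{N_PC} (c_{i,k} − ĉ_{i,k})² ‖Ψ_k‖²_{L²(Θ,μ)}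 + Σ_{k=N_PC+1}^∞ c_{i,k}² ‖Ψ_k‖²_{L²(Θ,μ)} ]. -/
/-!
The KL error is orthogonal across modes: since the `Φ_i` are orthonormal, Fubini reduces
`‖f_N - f_N^PC‖²` to `∑ λ_i ‖f_i - f_i^PC‖²`. For each mode, `f_i - f_i^PC` is the limit in `L²` of
partial sums of an orthogonal series whose coefficients are `c_{i,k} - ĉ_{i,k}` for `k ≤ N_PC` and
`c_{i,k}` beyond, so Parseval's identity for that series gives the two sums.
-/

open MeasureTheory Filter Topology Finset

section OrthogonalSums

variable {α : Type*} [MeasurableSpace α] {μ : Measure α}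

theorem integral_sq_sum_of_orthogonal {ι : Type*} (s : Finset ι) (u : ι → α → ℝ)
    (hint : ∀ i ∈ s, ∀ j ∈ s, Integrable (fun x => u i x * u j x) μ)
    (horth : ∀ i ∈ s, ∀ j ∈ s, i ≠ j → ∫ x, u i x * u j x ∂μ = 0) :
    ∫ x, (∑ i ∈ s, u i x) ^ 2 ∂μ = ∑ i ∈ s, ∫ x, u i x ^ 2 ∂μ := by
  calc ∫ x, (∑ i ∈ s, u i x) ^ 2 ∂μ
      = ∫ x, ∑ i ∈ s, ∑ j ∈ s, u i x * u j x ∂μ := by simp_rw [sq, sum_mul_sum]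
    _ = ∑ i ∈ s, ∑ j ∈ s, ∫ x, u i x * u j x ∂μ := by
        rw [integral_finsetSum _ fun i hi => integrable_finsetSum _ (hint i hi)]
        exact sum_congr rfl fun i hi => integral_finsetSum _ (hint i hi)
    _ = ∑ i ∈ s, ∫ x, u i x ^ 2 ∂μ := by
        refine sum_congr rfl fun i hi => ?_
        rw [sum_eq_single_of_mem i hi fun j hj hji => horth i hi j hj hji.symm]
        simp_rw [sq]

theorem integral_sq_sum_mul_of_orthogonal {ι : Type*} {Ψ : ι → α → ℝ}
    (hΨ : ∀ k, MemLp (Ψ k) 2 μ) (horth : ∀ k l, k ≠ l → ∫ x, Ψ k x * Ψ l x ∂μ = 0)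
    (a : ι → ℝ) (s : Finset ι) :
    ∫ x, (∑ k ∈ s, a k * Ψ k x) ^ 2 ∂μ = ∑ k ∈ s, a k ^ 2 * ∫ x, Ψ k x ^ 2 ∂μ := by
  have hmul : ∀ k l, (fun x => a k * Ψ k x * (a l * Ψ l x))
      = fun x => a k * a l * (Ψ k x * Ψ l x) := fun k l => by ext x; ring
  rw [integral_sq_sum_of_orthogonal]
  · simp_rw [mul_pow, integral_const_mul]
  · intro k _ l _
    rw [hmul]
    exact ((hΨ k).integrable_mul (hΨ l)).const_mul _
  · intro k _ l _ hkl
    rw [hmul, integral_const_mul, horth k l hkl, mul_zero]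

theorem MeasureTheory.MemLp.norm_toLp_sq {f : α → ℝ} (hf : MemLp f 2 μ) :
    ‖hf.toLp f‖ ^ 2 = ∫ x, f x ^ 2 ∂μ := by
  rw [← real_inner_self_eq_norm_sq, L2.inner_def]
  refine integral_congr_ae ?_
  filter_upwards [hf.coeFn_toLp] with x hx
  simp [hx, sq]

theorem hasSum_sq_mul_integral_sq_of_tendsto {Ψ : ℕ → α → ℝ}
    (hΨ : ∀ k, MemLp (Ψ k) 2 μ) (horth : ∀ k l, k ≠ l → ∫ x, Ψ k x * Ψ l x ∂μ = 0)
    {f : α → ℝ} (hf : MemLp f 2 μ) {a : ℕ → ℝ}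
    (hconv : Tendsto (fun K => ∫ x, (f x - ∑ k ∈ range K, a k * Ψ k x) ^ 2 ∂μ) atTop (𝓝 0)) :
    HasSum (fun k => a k ^ 2 * ∫ x, Ψ k x ^ 2 ∂μ) (∫ x, f x ^ 2 ∂μ) := by
  set S : ℕ → α → ℝ := fun K x => ∑ k ∈ range K, a k * Ψ k x
  have hS : ∀ K, MemLp (S K) 2 μ := fun K => memLp_finsetSum _ fun k _ => (hΨ k).const_mul _
  have hdist : ∀ K, ‖(hS K).toLp (S K) - hf.toLp f‖ = √(∫ x, (f x - S K x) ^ 2 ∂μ) := by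
    intro K
    rw [norm_sub_rev, ← hf.toLp_sub (hS K), ← Real.sqrt_sq (norm_nonneg _),
      MemLp.norm_toLp_sq]
    rfl
  have hlim : Tendsto (fun K => (hS K).toLp (S K)) atTop (𝓝 (hf.toLp f)) := by
    rw [tendsto_iff_norm_sub_tendsto_zero]
    simpa [hdist] using hconv.sqrt
  have hnorm := hlim.norm.pow 2
  rw [hasSum_iff_tendsto_nat_of_nonneg (fun k => by positivity)]
  simpa only [MemLp.norm_toLp_sq, S, integral_sq_sum_mul_of_orthogonal hΨ horth] using hnorm

theorem integral_sq_sub_truncation {Ψ : ℕ → α → ℝ}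
    (hΨ : ∀ k, MemLp (Ψ k) 2 μ) (horth : ∀ k l, k ≠ l → ∫ x, Ψ k x * Ψ l x ∂μ = 0)
    {f : α → ℝ} (hf : MemLp f 2 μ) {c : ℕ → ℝ}
    (hconv : Tendsto (fun K => ∫ x, (f x - ∑ k ∈ range K, c k * Ψ k x) ^ 2 ∂μ) atTop (𝓝 0))
    (chat : ℕ → ℝ) (n : ℕ) :
    ∫ x, (f x - ∑ k ∈ range n, chat k * Ψ k x) ^ 2 ∂μ
      = ∑ k ∈ range n, (c k - chat k) ^ 2 * ∫ x, Ψ k x ^ 2 ∂μ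
        + ∑' k, c (k + n) ^ 2 * ∫ x, Ψ (k + n) x ^ 2 ∂μ := by
  set a : ℕ → ℝ := fun k => c k - if k ∈ range n then chat k else 0
  have hg : MemLp (fun x => ∑ k ∈ range n, chat k * Ψ k x) 2 μ :=
    memLp_finsetSum _ fun k _ => (hΨ k).const_mul _
  have hpartial : ∀ K, n ≤ K → ∀ x, ∑ k ∈ range K, a k * Ψ k x
      = ∑ k ∈ range K, c k * Ψ k x - ∑ k ∈ range n, chat k * Ψ k x := by
    intro K hK x
    simp only [a, sub_mul, sum_sub_distrib, ite_mul, zero_mul, sum_ite_mem,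
      inter_eq_right.2 (range_subset_range.2 hK)]
  have hconv' : Tendsto (fun K => ∫ x, ((f x - ∑ k ∈ range n, chat k * Ψ k x)
      - ∑ k ∈ range K, a k * Ψ k x) ^ 2 ∂μ) atTop (𝓝 0) := by
    refine hconv.congr' ?_
    filter_upwards [eventually_ge_atTop n] with K hK
    simp_rw [hpartial K hK, sub_sub_sub_cancel_right]
  have hsum := hasSum_sq_mul_integral_sq_of_tendsto hΨ horth (hf.sub hg) hconv'
  simp only [Pi.sub_apply] at hsum
  rw [← hsum.tsum_eq, ← hsum.summable.sum_add_tsum_nat_add n]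
  congr 1
  · exact sum_congr rfl fun k hk => by simp [a, mem_range.1 hk]
  · simp [a]

end OrthogonalSums

theorem integral_prod_sq_sum_mul_orthonormal {α β ι : Type*} [MeasurableSpace α]
    [MeasurableSpace β] {μ : Measure α} {ν : Measure β} [SFinite μ] [SFinite ν] [DecidableEq ι]
    {u : ι → α → ℝ} (hu : ∀ i, MemLp (u i) 2 μ) {Φ : ι → β → ℝ} (hΦ : ∀ i, MemLp (Φ i) 2 ν)
    (hΦ_on : ∀ i j, ∫ y, Φ i y * Φ j y ∂ν = if i = j then 1 else 0) (s : Finset ι) :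
    ∫ p, (∑ i ∈ s, u i p.1 * Φ i p.2) ^ 2 ∂μ.prod ν = ∑ i ∈ s, ∫ x, u i x ^ 2 ∂μ := by
  have hmul : ∀ i j, (fun p : α × β => u i p.1 * Φ i p.2 * (u j p.1 * Φ j p.2))
      = fun p => u i p.1 * u j p.1 * (Φ i p.2 * Φ j p.2) := fun i j => by ext p; ring
  have hprod : ∀ i j, ∫ p, u i p.1 * Φ i p.2 * (u j p.1 * Φ j p.2) ∂μ.prod ν
      = (∫ x, u i x * u j x ∂μ) * ∫ y, Φ i y * Φ j y ∂ν := fun i j => by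
    rw [hmul, ← integral_prod_mul]
  rw [integral_sq_sum_of_orthogonal]
  · refine sum_congr rfl fun i _ => ?_
    have h := hprod i i
    rw [hΦ_on, if_pos rfl, mul_one] at h
    simpa only [← sq, mul_pow] using h
  · intro i _ j _
    rw [hmul]
    exact ((hu i).integrable_mul (hu j)).mul_prod ((hΦ i).integrable_mul (hΦ j))
  · intro i _ j _ hij
    rw [hprod, hΦ_on, if_neg hij, mul_zero]

theorem kle_pce_surrogate_error_general
    {Θ X : Type*} [MeasurableSpace Θ] [MeasurableSpace X]
    (μ : Measure Θ) (ν : Measure X)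
    [IsProbabilityMeasure μ] [IsFiniteMeasure ν]
    (lam : ℕ → ℝ) (hlam_nonneg : ∀ i, 0 ≤ lam i)
    (Phi : ℕ → X → ℝ) (hPhi_mem : ∀ i, MemLp (Phi i) 2 ν)
    (hPhi_on : ∀ i j, ∫ s, Phi i s * Phi j s ∂ν = if i = j then 1 else 0)
    (f_mode : ℕ → Θ → ℝ) (hf_mem : ∀ i, MemLp (f_mode i) 2 μ)
    (fbar : X → ℝ)
    (Psi : ℕ → Θ → ℝ) (hPsi_mem : ∀ k, MemLp (Psi k) 2 μ)
    (hPsi_orth : ∀ k l, k ≠ l → ∫ ξ, Psi k ξ * Psi l ξ ∂μ = 0)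
    (N NPC : ℕ) (c : ℕ → ℕ → ℝ)
    (hPCE : ∀ i < N, Tendsto (fun K => ∫ ξ,
        (f_mode i ξ - ∑ k ∈ Finset.range K, c i k * Psi k ξ) ^ 2 ∂μ) atTop (𝓝 0))
    (chat : ℕ → ℕ → ℝ) :
    ∫ p, ((fbar p.2 + ∑ i ∈ Finset.range N,
            Real.sqrt (lam i) * f_mode i p.1 * Phi i p.2)
        - (fbar p.2 + ∑ i ∈ Finset.range N,
            Real.sqrt (lam i) *
              (∑ k ∈ Finset.range (NPC + 1), chat i k * Psi k p.1) * Phi i p.2)) ^ 2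
        ∂(μ.prod ν)
      = ∑ i ∈ Finset.range N, lam i *
          ((∑ k ∈ Finset.range (NPC + 1),
              (c i k - chat i k) ^ 2 * ∫ ξ, (Psi k ξ) ^ 2 ∂μ)
            + ∑' k : ℕ,
              (c i (k + (NPC + 1))) ^ 2 * ∫ ξ, (Psi (k + (NPC + 1)) ξ) ^ 2 ∂μ) := by
  have hdiff : ∀ p : Θ × X,
      (fbar p.2 + ∑ i ∈ range N, √(lam i) * f_mode i p.1 * Phi i p.2)
        - (fbar p.2 + ∑ i ∈ range N,
            √(lam i) * (∑ k ∈ range (NPC + 1), chat i k * Psi k p.1) * Phi i p.2)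
      = ∑ i ∈ range N,
          √(lam i) * (f_mode i p.1 - ∑ k ∈ range (NPC + 1), chat i k * Psi k p.1) * Phi i p.2 :=
    fun p => by
      rw [add_sub_add_left_eq_sub, ← sum_sub_distrib]
      exact sum_congr rfl fun i _ => by ring
  have hmode : ∀ i, MemLp (fun ξ => f_mode i ξ - ∑ k ∈ range (NPC + 1), chat i k * Psi k ξ) 2 μ :=
    fun i => (hf_mem i).sub (memLp_finsetSum _ fun k _ => (hPsi_mem k).const_mul _)
  simp_rw [hdiff, integral_prod_sq_sum_mul_orthonormal (fun i => (hmode i).const_mul (√(lam i)))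
    hPhi_mem hPhi_on, mul_pow, integral_const_mul]
  refine sum_congr rfl fun i hi => ?_
  rw [Real.sq_sqrt (hlam_nonneg i),
    integral_sq_sub_truncation hPsi_mem hPsi_orth (hf_mem i) (hPCE i (mem_range.1 hi))]

/-- The error between the truncated KLE `f_N` and the bispectral surrogate `f_N^PC`
(obtained by replacing each KL mode with a truncated PCE with approximate
coefficients) equals
`∑_{i=1}^N λ_i [ ∑_{k=0}^{N_PC} (c_{i,k} - ĉ_{i,k})² ‖Ψ_k‖² + ∑_{k>N_PC} c_{i,k}² ‖Ψ_k‖² ]`. -/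
theorem kle_pce_surrogate_error
    {Θ X : Type*} [MeasurableSpace Θ] [MeasurableSpace X]
    (μ : Measure Θ) (ν : Measure X)
    [IsProbabilityMeasure μ] [IsFiniteMeasure ν]
    (lam : ℕ → ℝ) (hlam_nonneg : ∀ i, 0 ≤ lam i) (hlam_sum : Summable lam)
    (Phi : ℕ → X → ℝ) (hPhi_mem : ∀ i, MemLp (Phi i) 2 ν)
    (hPhi_on : ∀ i j, ∫ s, Phi i s * Phi j s ∂ν = if i = j then 1 else 0)
    (f_mode : ℕ → Θ → ℝ) (hf_mem : ∀ i, MemLp (f_mode i) 2 μ)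
    (hf_on : ∀ i j, ∫ ξ, f_mode i ξ * f_mode j ξ ∂μ = if i = j then 1 else 0)
    (fbar : X → ℝ) (hfbar : MemLp fbar 2 ν)
    (Psi : ℕ → Θ → ℝ) (hPsi_mem : ∀ k, MemLp (Psi k) 2 μ)
    (hPsi_orth : ∀ k l, k ≠ l → ∫ ξ, Psi k ξ * Psi l ξ ∂μ = 0)
    (hPsi_ne : ∀ k, ¬ (Psi k =ᵐ[μ] 0))
    (N NPC : ℕ) (c : ℕ → ℕ → ℝ)
    (hPCE : ∀ i < N, Tendsto (fun K => ∫ ξ,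
        (f_mode i ξ - ∑ k ∈ Finset.range K, c i k * Psi k ξ) ^ 2 ∂μ) atTop (𝓝 0))
    (chat : ℕ → ℕ → ℝ) :
    ∫ p, ((fbar p.2 + ∑ i ∈ Finset.range N,
            Real.sqrt (lam i) * f_mode i p.1 * Phi i p.2)
        - (fbar p.2 + ∑ i ∈ Finset.range N,
            Real.sqrt (lam i) *
              (∑ k ∈ Finset.range (NPC + 1), chat i k * Psi k p.1) * Phi i p.2)) ^ 2
        ∂(μ.prod ν)
      = ∑ i ∈ Finset.range N, lam i *
          ((∑ k ∈ Finset.range (NPC + 1),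
              (c i k - chat i k) ^ 2 * ∫ ξ, (Psi k ξ) ^ 2 ∂μ)
            + ∑' k : ℕ,
              (c i (k + (NPC + 1))) ^ 2 * ∫ ξ, (Psi (k + (NPC + 1)) ξ) ^ 2 ∂μ) :=
  kle_pce_surrogate_error_general μ ν lam hlam_nonneg Phi hPhi_mem hPhi_on f_mode hf_mem fbar Psi
    hPsi_mem hPsi_orth N NPC c hPCE chat
end

section
/- Let (Θ, μ) be a probability space and (X, ν) a finite measure space. Let (λ_i)_{i≥1} be a summable sequence of nonnegative reals, (Φ_i)_{i≥1} an orthonormal family in L²(X, ν), (f_i)_{i≥1} an orthonormal family in L²(Θ, μ), and f̄ ∈ L²(X, ν). Define f ∈ L²(Θ × X, μ ⊗ ν) by f(ξ, s) = f̄(s) + Σ_{i=1}^∞ √λ_i f_i(ξ) Φ_i(s) (series converging in L²). Let (Ψ_k)_{k≥0} be a family of pairwise orthogonal nonzero elements of L²(Θ, μ), suppose f_i = Σ_{k=0}^∞ c_{i,k} Ψ_k in L²(Θ, μ) for i = 1, …, N, let f_i^PC = Σ_{k=0}^{N_PC} ĉ_{i,k} Ψ_k, and let f_N^PC(ξ,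 s) = f̄(s) + Σ_{i=1}^N √λ_i f_i^PC(ξ) Φ_i(s). Then the total surrogate error is bounded by ‖f − f_N^PC‖²_{L²(Θ×X)} ≤ Σ_{i=N+1}^∞ λ_i + Σ_{i=1}^N λ_i Σ_{k=0}^{N_PC} (c_{i,k} − ĉ_{i,k})² ‖Ψ_k‖²_{L²(Θ,μ)} + Σ_{i=1}^N λ_i Σ_{k=N_PC+1}^∞ c_{i,k}² ‖Ψ_k‖²_{L²(Θ,μ)}, i.e., by the sum of the KLE truncation error, the error due to inexact PCE coefficients, and the PCE truncation error. -/
/-!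
The surrogate error is the L²(μ ⊗ ν)-limit of the partial sums of the series with terms
√λᵢ (fᵢ - fᵢᴾᶜ) ⊗ Φᵢ for i < N and √λᵢ fᵢ ⊗ Φᵢ for i ≥ N. These terms are pairwise orthogonal
because the Φᵢ are, so Parseval's identity gives the squared error as
Σ_{i ≥ N} λᵢ + Σ_{i < N} λᵢ ‖fᵢ - fᵢᴾᶜ‖². Parseval's identity for the PCE of fᵢ in the orthogonal
family (Ψₖ) splits each ‖fᵢ - fᵢᴾᶜ‖² into the coefficient error and the PCE truncation error.
The bound is in fact an equality.
-/

open MeasureTheory Filter Topology Finset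
open scoped InnerProductSpace

section InnerProductSpace

variable {E : Type*} [NormedAddCommGroup E] [InnerProductSpace ℝ E]

theorem norm_sum_range_sq_of_pairwise_inner_eq_zero {v : ℕ → E}
    (hv : Pairwise fun i j => ⟪v i, v j⟫_ℝ = 0) (M : ℕ) :
    ‖∑ i ∈ range M, v i‖ ^ 2 = ∑ i ∈ range M, ‖v i‖ ^ 2 := by
  induction M with
  | zero => simp
  | succ M ih =>
    have hM : ⟪∑ i ∈ range M, v i, v M⟫_ℝ = 0 :=
      (sum_inner _ _ _).trans (sum_eq_zero fun i hi => hv (mem_range.1 hi).ne)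
    rw [sum_range_succ, sum_range_succ, norm_add_sq_real, hM, ih]
    ring

theorem hasSum_norm_sq_of_pairwise_inner_eq_zero {v : ℕ → E} {x : E}
    (hv : Pairwise fun i j => ⟪v i, v j⟫_ℝ = 0)
    (hx : Tendsto (fun M => ∑ i ∈ range M, v i) atTop (𝓝 x)) :
    HasSum (fun i => ‖v i‖ ^ 2) (‖x‖ ^ 2) := by
  rw [hasSum_iff_tendsto_nat_of_nonneg fun i => sq_nonneg _]
  simp_rw [← norm_sum_range_sq_of_pairwise_inner_eq_zero hv]
  exact hx.norm.pow 2

end InnerProductSpace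

theorem Finset.sum_range_ite_lt {β : Type*} [AddCommMonoid β] {n M : ℕ} (h : n ≤ M) (d : ℕ → β) :
    ∑ i ∈ range M, (if i < n then d i else 0) = ∑ i ∈ range n, d i := by
  rw [← sum_filter]
  congr 1
  ext i
  simp only [mem_filter, mem_range]
  omega

namespace MeasureTheory

section L2

variable {α : Type*} [MeasurableSpace α] {m : Measure α}

theorem MemLp.toLp_sum {ι : Type*} (s : Finset ι) {g : ι → α → ℝ}
    (hg : ∀ i, MemLp (g i) 2 m) :
    ∑ i ∈ s, (hg i).toLp (g i) = (memLp_finsetSum' s fun i _ => hg i).toLp (∑ i ∈ s, g i) := by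
  classical
  induction s using Finset.induction_on with
  | empty => simp
  | insert j s hj ih => simp_rw [sum_insert hj, ih, ← MemLp.toLp_add]

theorem MemLp.inner_toLp_two {f g : α → ℝ} (hf : MemLp f 2 m) (hg : MemLp g 2 m) :
    ⟪hf.toLp f, hg.toLp g⟫_ℝ = ∫ a, f a * g a ∂m := by
  rw [L2.inner_def]
  refine integral_congr_ae ?_
  filter_upwards [hf.coeFn_toLp, hg.coeFn_toLp] with a hfa hga
  rw [hfa, hga, RCLike.inner_apply', conj_trivial]

theorem MemLp.norm_toLp_two_sq {f : α → ℝ} (hf : MemLp f 2 m) :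
    ‖hf.toLp f‖ ^ 2 = ∫ a, f a ^ 2 ∂m := by
  simp_rw [← real_inner_self_eq_norm_sq, hf.inner_toLp_two hf, sq]

theorem hasSum_integral_sq_of_tendsto_integral_sq_sub_sum {f : α → ℝ} {g : ℕ → α → ℝ}
    (hf : MemLp f 2 m) (hg : ∀ i, MemLp (g i) 2 m)
    (horth : Pairwise fun i j => ∫ a, g i a * g j a ∂m = 0)
    (hconv : Tendsto (fun M => ∫ a, (f a - ∑ i ∈ range M, g i a) ^ 2 ∂m) atTop (𝓝 0)) :
    HasSum (fun i => ∫ a, g i a ^ 2 ∂m) (∫ a, f a ^ 2 ∂m) := by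
  have hsum : Tendsto (fun M => ∑ i ∈ range M, (hg i).toLp (g i)) atTop (𝓝 (hf.toLp f)) := by
    have hnorm : ∀ M, ‖hf.toLp f - ∑ i ∈ range M, (hg i).toLp (g i)‖ ^ 2
        = ∫ a, (f a - ∑ i ∈ range M, g i a) ^ 2 ∂m := fun M => by
      rw [MemLp.toLp_sum, ← MemLp.toLp_sub, MemLp.norm_toLp_two_sq]
      simp only [Pi.sub_apply, Finset.sum_apply]
    rw [tendsto_iff_norm_sub_tendsto_zero]
    simpa [norm_sub_rev _ (hf.toLp f), Real.sqrt_sq (norm_nonneg _)]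
      using (hconv.congr fun M => (hnorm M).symm).sqrt
  have horth' : Pairwise fun i j => ⟪(hg i).toLp (g i), (hg j).toLp (g j)⟫_ℝ = 0 :=
    fun i j hij => (MemLp.inner_toLp_two _ _).trans (horth hij)
  simpa only [MemLp.norm_toLp_two_sq] using hasSum_norm_sq_of_pairwise_inner_eq_zero horth' hsum

theorem tendsto_integral_sq_sub_sum_sub_head {f e : α → ℝ} {g d w : ℕ → α → ℝ} {n : ℕ}
    (hconv : Tendsto (fun M => ∫ a, (f a - ∑ i ∈ range M, g i a) ^ 2 ∂m) atTop (𝓝 0))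
    (he : ∀ a, e a = f a - ∑ i ∈ range n, d i a)
    (hw : ∀ i a, w i a = g i a - if i < n then d i a else 0) :
    Tendsto (fun M => ∫ a, (e a - ∑ i ∈ range M, w i a) ^ 2 ∂m) atTop (𝓝 0) := by
  refine hconv.congr' ?_
  filter_upwards [eventually_ge_atTop n] with M hM
  refine integral_congr_ae (ae_of_all _ fun a => ?_)
  simp only [he, hw, sum_sub_distrib, sum_range_ite_lt hM (d · a)]
  ring

theorem integral_sq_sub_sum_range_eq {f : α → ℝ} {Ψ : ℕ → α → ℝ} {c ĉ : ℕ → ℝ} (n : ℕ)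
    (hf : MemLp f 2 m) (hΨ : ∀ k, MemLp (Ψ k) 2 m)
    (horth : Pairwise fun k l => ∫ a, Ψ k a * Ψ l a ∂m = 0)
    (hconv : Tendsto (fun K => ∫ a, (f a - ∑ k ∈ range K, c k * Ψ k a) ^ 2 ∂m) atTop (𝓝 0)) :
    ∫ a, (f a - ∑ k ∈ range n, ĉ k * Ψ k a) ^ 2 ∂m
      = ∑ k ∈ range n, (c k - ĉ k) ^ 2 * ∫ a, Ψ k a ^ 2 ∂m
        + ∑' k, c (k + n) ^ 2 * ∫ a, Ψ (k + n) a ^ 2 ∂m := by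
  set b : ℕ → ℝ := fun k => c k - if k < n then ĉ k else 0
  have hterm : ∀ (x : ℝ) k, ∫ a, (x * Ψ k a) ^ 2 ∂m = x ^ 2 * ∫ a, Ψ k a ^ 2 ∂m := fun x k => by
    simp_rw [mul_pow]
    exact integral_const_mul _ _
  have horth' : Pairwise fun k l => ∫ a, b k * Ψ k a * (b l * Ψ l a) ∂m = 0 := fun k l hkl => by
    have hsplit : ∀ a, b k * Ψ k a * (b l * Ψ l a) = b k * b l * (Ψ k a * Ψ l a) :=
      fun a => mul_mul_mul_comm _ _ _ _
    simp only [hsplit, integral_const_mul, horth hkl, mul_zero]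
  have hparseval := hasSum_integral_sq_of_tendsto_integral_sq_sub_sum
    (f := fun a => f a - ∑ k ∈ range n, ĉ k * Ψ k a)
    (hf.sub (memLp_finsetSum (range n) fun k _ => (hΨ k).const_mul (ĉ k)))
    (fun k => (hΨ k).const_mul (b k)) horth'
    (tendsto_integral_sq_sub_sum_sub_head (d := fun k a => ĉ k * Ψ k a) hconv (fun _ => rfl)
      fun k a => by simp only [b]; split_ifs <;> ring)
  rw [← hparseval.tsum_eq, ← hparseval.summable.sum_add_tsum_nat_add n]
  congr 1
  · refine sum_congr rfl fun k hk => ?_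
    simp only [hterm, b, if_pos (mem_range.1 hk)]
  · refine tsum_congr fun k => ?_
    simp only [hterm, b, if_neg (show ¬k + n < n by omega), sub_zero]

end L2

section Prod

variable {Θ X : Type*} [MeasurableSpace Θ] [MeasurableSpace X] {μ : Measure Θ} {ν : Measure X}

theorem MemLp.mul_prod {g : Θ → ℝ} {h : X → ℝ} (hg : MemLp g 2 μ) (hh : MemLp h 2 ν) :
    MemLp (fun p : Θ × X => g p.1 * h p.2) 2 (μ.prod ν) := by
  have hmeas : AEStronglyMeasurable (fun p : Θ × X => g p.1 * h p.2) (μ.prod ν) :=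
    (hg.1.comp_quasiMeasurePreserving Measure.quasiMeasurePreserving_fst).mul
      (hh.1.comp_quasiMeasurePreserving Measure.quasiMeasurePreserving_snd)
  rw [memLp_two_iff_integrable_sq hmeas]
  simp_rw [mul_pow]
  exact ((memLp_two_iff_integrable_sq hg.1).1 hg).mul_prod
    ((memLp_two_iff_integrable_sq hh.1).1 hh)

theorem integral_prod_mul_mul_mul [SFinite μ] [SFinite ν] (g₁ g₂ : Θ → ℝ) (h₁ h₂ : X → ℝ) :
    ∫ p, g₁ p.1 * h₁ p.2 * (g₂ p.1 * h₂ p.2) ∂(μ.prod ν)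
      = (∫ ξ, g₁ ξ * g₂ ξ ∂μ) * ∫ s, h₁ s * h₂ s ∂ν := by
  simp only [mul_mul_mul_comm (g₁ _)]
  exact integral_prod_mul (fun ξ => g₁ ξ * g₂ ξ) fun s => h₁ s * h₂ s

theorem integral_sq_sub_kl_surrogate_eq [IsProbabilityMeasure μ] [SFinite ν] {lam : ℕ → ℝ}
    {Phi : ℕ → X → ℝ} {f h : ℕ → Θ → ℝ} {fbar : X → ℝ} {F : Θ × X → ℝ} (N : ℕ)
    (hlam : ∀ i, 0 ≤ lam i)
    (hPhi_mem : ∀ i, MemLp (Phi i) 2 ν)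
    (hPhi_on : ∀ i j, ∫ s, Phi i s * Phi j s ∂ν = if i = j then 1 else 0)
    (hf_mem : ∀ i, MemLp (f i) 2 μ) (hf_norm : ∀ i, ∫ ξ, f i ξ ^ 2 ∂μ = 1)
    (hfbar : MemLp fbar 2 ν) (hF : MemLp F 2 (μ.prod ν))
    (hconv : Tendsto (fun M => ∫ p, (F p - (fbar p.2 + ∑ i ∈ range M,
        √(lam i) * f i p.1 * Phi i p.2)) ^ 2 ∂(μ.prod ν)) atTop (𝓝 0))
    (hh_mem : ∀ i, MemLp (h i) 2 μ) :
    ∫ p, (F p - (fbar p.2 + ∑ i ∈ range N, √(lam i) * h i p.1 * Phi i p.2)) ^ 2 ∂(μ.prod ν)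
      = ∑' i, lam (N + i) + ∑ i ∈ range N, lam i * ∫ ξ, (f i ξ - h i ξ) ^ 2 ∂μ := by
  set r : ℕ → Θ → ℝ := fun i ξ => f i ξ - if i < N then h i ξ else 0
  have hr_mem : ∀ i, MemLp (r i) 2 μ := fun i => by
    refine (hf_mem i).sub ?_
    split_ifs
    exacts [hh_mem i, MemLp.zero]
  have hterm : ∀ i, ∫ p, (√(lam i) * r i p.1 * Phi i p.2) ^ 2 ∂(μ.prod ν)
      = lam i * ∫ ξ, r i ξ ^ 2 ∂μ := fun i => by
    have hsq : ∀ ξ, √(lam i) * r i ξ * (√(lam i) * r i ξ) = lam i * (r i ξ * r i ξ) :=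
      fun ξ => by rw [mul_mul_mul_comm, Real.mul_self_sqrt (hlam i)]
    simp_rw [sq, integral_prod_mul_mul_mul (fun ξ => √(lam i) * r i ξ) (fun ξ => √(lam i) * r i ξ),
      hsq, hPhi_on, if_pos, mul_one, integral_const_mul]
  have horth : Pairwise fun i j => ∫ p, √(lam i) * r i p.1 * Phi i p.2
      * (√(lam j) * r j p.1 * Phi j p.2) ∂(μ.prod ν) = 0 := fun i j hij => by
    beta_reduce
    rw [integral_prod_mul_mul_mul (fun ξ => √(lam i) * r i ξ) (fun ξ => √(lam j) * r j ξ),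
      hPhi_on, if_neg hij, mul_zero]
  have hparseval := hasSum_integral_sq_of_tendsto_integral_sq_sub_sum
    (f := fun p => F p - (fbar p.2 + ∑ i ∈ range N, √(lam i) * h i p.1 * Phi i p.2))
    (hF.sub ((hfbar.comp_measurePreserving measurePreserving_snd).add (memLp_finsetSum (range N)
      fun i _ => ((hh_mem i).const_mul _).mul_prod (hPhi_mem i))))
    (fun i => ((hr_mem i).const_mul _).mul_prod (hPhi_mem i)) horth
    (tendsto_integral_sq_sub_sum_sub_head (d := fun i p => √(lam i) * h i p.1 * Phi i p.2)
      (f := fun p => F p - fbar p.2) (by simpa only [sub_add_eq_sub_sub] using hconv)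
      (fun p => sub_add_eq_sub_sub _ _ _) fun i p => by simp only [r]; split_ifs <;> ring)
  rw [← hparseval.tsum_eq, ← hparseval.summable.sum_add_tsum_nat_add N, add_comm]
  congr 1
  · refine tsum_congr fun i => ?_
    rw [hterm, add_comm N i]
    simp only [r, if_neg (show ¬i + N < N by omega), sub_zero, hf_norm, mul_one]
  · refine sum_congr rfl fun i hi => ?_
    rw [hterm]
    simp only [r, if_pos (mem_range.1 hi)]

end Prod

end MeasureTheory

theorem bispectral_surrogate_total_error_bound_general
    {Θ X : Type*} [MeasurableSpace Θ] [MeasurableSpace X]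
    (μ : Measure Θ) (ν : Measure X)
    [IsProbabilityMeasure μ] [IsFiniteMeasure ν]
    (lam : ℕ → ℝ) (hlam_nonneg : ∀ i, 0 ≤ lam i)
    (Phi : ℕ → X → ℝ) (hPhi_mem : ∀ i, MemLp (Phi i) 2 ν)
    (hPhi_on : ∀ i j, ∫ s, Phi i s * Phi j s ∂ν = if i = j then 1 else 0)
    (f_mode : ℕ → Θ → ℝ) (hf_mem : ∀ i, MemLp (f_mode i) 2 μ)
    (hf_on : ∀ i j, ∫ ξ, f_mode i ξ * f_mode j ξ ∂μ = if i = j then 1 else 0)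
    (fbar : X → ℝ) (hfbar : MemLp fbar 2 ν)
    (F : Θ × X → ℝ) (hF : MemLp F 2 (μ.prod ν))
    (hconv : Tendsto (fun M => ∫ p, (F p - (fbar p.2 + ∑ i ∈ Finset.range M,
        Real.sqrt (lam i) * f_mode i p.1 * Phi i p.2)) ^ 2 ∂(μ.prod ν))
      atTop (𝓝 0))
    (Psi : ℕ → Θ → ℝ) (hPsi_mem : ∀ k, MemLp (Psi k) 2 μ)
    (hPsi_orth : ∀ k l, k ≠ l → ∫ ξ, Psi k ξ * Psi l ξ ∂μ = 0)
    (N NPC : ℕ) (c : ℕ → ℕ → ℝ)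
    (hPCE : ∀ i < N, Tendsto (fun K => ∫ ξ,
        (f_mode i ξ - ∑ k ∈ Finset.range K, c i k * Psi k ξ) ^ 2 ∂μ) atTop (𝓝 0))
    (chat : ℕ → ℕ → ℝ) :
    ∫ p, (F p - (fbar p.2 + ∑ i ∈ Finset.range N,
            Real.sqrt (lam i) *
              (∑ k ∈ Finset.range (NPC + 1), chat i k * Psi k p.1) * Phi i p.2)) ^ 2
        ∂(μ.prod ν)
      ≤ (∑' i : ℕ, lam (N + i))
        + (∑ i ∈ Finset.range N, lam i *
            ∑ k ∈ Finset.range (NPC + 1),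
              (c i k - chat i k) ^ 2 * ∫ ξ, (Psi k ξ) ^ 2 ∂μ)
        + ∑ i ∈ Finset.range N, lam i *
            ∑' k : ℕ,
              (c i (k + (NPC + 1))) ^ 2 * ∫ ξ, (Psi (k + (NPC + 1)) ξ) ^ 2 ∂μ := by
  have hf_norm : ∀ i, ∫ ξ, f_mode i ξ ^ 2 ∂μ = 1 := fun i => by simpa [sq] using hf_on i i
  have hPC_mem : ∀ i, MemLp (fun ξ => ∑ k ∈ range (NPC + 1), chat i k * Psi k ξ) 2 μ :=
    fun i => memLp_finsetSum _ fun k _ => (hPsi_mem k).const_mul _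
  rw [integral_sq_sub_kl_surrogate_eq N hlam_nonneg hPhi_mem hPhi_on hf_mem hf_norm hfbar hF hconv
    hPC_mem, add_assoc, ← sum_add_distrib]
  refine le_of_eq (congrArg _ (sum_congr rfl fun i hi => ?_))
  rw [integral_sq_sub_sum_range_eq (NPC + 1) (hf_mem i) hPsi_mem (fun k l => hPsi_orth k l)
    (hPCE i (mem_range.1 hi)), mul_add]

/-- Upper bound on the total error of the bispectral surrogate: KLE truncation
error, plus error due to inexact PCE coefficients, plus PCE truncation error. -/
theorem bispectral_surrogate_total_error_bound
    {Θ X : Type*} [MeasurableSpace Θ] [MeasurableSpace X]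
    (μ : Measure Θ) (ν : Measure X)
    [IsProbabilityMeasure μ] [IsFiniteMeasure ν]
    (lam : ℕ → ℝ) (hlam_nonneg : ∀ i, 0 ≤ lam i) (hlam_sum : Summable lam)
    (Phi : ℕ → X → ℝ) (hPhi_mem : ∀ i, MemLp (Phi i) 2 ν)
    (hPhi_on : ∀ i j, ∫ s, Phi i s * Phi j s ∂ν = if i = j then 1 else 0)
    (f_mode : ℕ → Θ → ℝ) (hf_mem : ∀ i, MemLp (f_mode i) 2 μ)
    (hf_on : ∀ i j, ∫ ξ, f_mode i ξ * f_mode j ξ ∂μ = if i = j then 1 else 0)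
    (fbar : X → ℝ) (hfbar : MemLp fbar 2 ν)
    (F : Θ × X → ℝ) (hF : MemLp F 2 (μ.prod ν))
    (hconv : Tendsto (fun M => ∫ p, (F p - (fbar p.2 + ∑ i ∈ Finset.range M,
        Real.sqrt (lam i) * f_mode i p.1 * Phi i p.2)) ^ 2 ∂(μ.prod ν))
      atTop (𝓝 0))
    (Psi : ℕ → Θ → ℝ) (hPsi_mem : ∀ k, MemLp (Psi k) 2 μ)
    (hPsi_orth : ∀ k l, k ≠ l → ∫ ξ, Psi k ξ * Psi l ξ ∂μ = 0)
    (hPsi_ne : ∀ k, ¬ (Psi k =ᵐ[μ] 0))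
    (N NPC : ℕ) (c : ℕ → ℕ → ℝ)
    (hPCE : ∀ i < N, Tendsto (fun K => ∫ ξ,
        (f_mode i ξ - ∑ k ∈ Finset.range K, c i k * Psi k ξ) ^ 2 ∂μ) atTop (𝓝 0))
    (chat : ℕ → ℕ → ℝ) :
    ∫ p, (F p - (fbar p.2 + ∑ i ∈ Finset.range N,
            Real.sqrt (lam i) *
              (∑ k ∈ Finset.range (NPC + 1), chat i k * Psi k p.1) * Phi i p.2)) ^ 2
        ∂(μ.prod ν)
      ≤ (∑' i : ℕ, lam (N + i))
        + (∑ i ∈ Finset.range N, lam i *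
            ∑ k ∈ Finset.range (NPC + 1),
              (c i k - chat i k) ^ 2 * ∫ ξ, (Psi k ξ) ^ 2 ∂μ)
        + ∑ i ∈ Finset.range N, lam i *
            ∑' k : ℕ,
              (c i (k + (NPC + 1))) ^ 2 * ∫ ξ, (Psi (k + (NPC + 1)) ξ) ^ 2 ∂μ :=
  bispectral_surrogate_total_error_bound_general μ ν lam hlam_nonneg Phi hPhi_mem hPhi_on f_mode
    hf_mem hf_on fbar hfbar F hF hconv Psi hPsi_mem hPsi_orth N NPC c hPCE chat
end
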